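/- In a T-tiling of an H × W rectangle where T is deterministic with color partition Col ⊔ Col', all tiles in the same row have their top colors on the same side of the partition: for each row i, either up(τ(i,j)) ∈ Col for all j, or up(τ(i,j)) ∈ Col' for all j. -/

import Mathlib

structure Tile (C : Type) where
  left : C
  up : C
  right : C
  down : C
deriving DecidableEq

/-- A `T`-tiling of the `H × W` rectangle: all tiles are from `T`, the borders are
white on all four sides, and adjacent tiles match horizontally and vertically. -/
def IsTiling {C : Type} (white : C) (T : Finset (Tile C)) (H W : ℕ)
    (τ : Fin H → Fin W → Tile C) : Prop :=
  (∀ i j, τ i j ∈ T) ∧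
  (∀ i j, j.val = 0 → (τ i j).left = white) ∧
  (∀ i j, j.val = W - 1 → (τ i j).right = white) ∧
  (∀ i j, i.val = 0 → (τ i j).up = white) ∧
  (∀ i j, i.val = H - 1 → (τ i j).down = white) ∧
  (∀ (i : Fin H) (j : Fin W) (h : j.val + 1 < W),
      (τ i j).right = (τ i ⟨j.val + 1, h⟩).left) ∧
  (∀ (i : Fin H) (j : Fin W) (h : i.val + 1 < H),
      (τ i j).down = (τ ⟨i.val + 1, h⟩ j).up)

/-- A `T`-tiling of the `h × 1` rectangle (a single column): left/right colors of all
tiles are white, top of the first and bottom of the last tile are white, and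
consecutive tiles match vertically. -/
def IsColTiling {C : Type} (white : C) (T : Finset (Tile C)) (h : ℕ)
    (τ : Fin h → Tile C) : Prop :=
  (∀ i, τ i ∈ T) ∧
  (∀ i : Fin h, i.val = 0 → (τ i).up = white) ∧
  (∀ i : Fin h, i.val = h - 1 → (τ i).down = white) ∧
  (∀ i, (τ i).left = white) ∧
  (∀ i, (τ i).right = white) ∧
  (∀ (i : Fin h) (hlt : i.val + 1 < h), (τ i).down = (τ ⟨i.val + 1, hlt⟩).up)

/-- A deterministic set of tile types: there is a partition of the colors
`C = Col ⊔ Colᶜ` with `white ∈ Col` such that tops and bottoms of tiles lie on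
opposite sides, and a tile is determined by its (left,up) colors when its left
color is in `Col`, and by its (right,up) colors when its right color is in `Colᶜ`. -/
def Deterministic {C : Type} (white : C) (T : Finset (Tile C)) : Prop :=
  ∃ Col : Set C, white ∈ Col ∧
    (∀ t ∈ T, (t.up ∈ Col ↔ t.down ∉ Col)) ∧
    (∀ c ∈ Col, ∀ c' : C, ∀ t ∈ T, ∀ t' ∈ T,
       t.left = c → t.up = c' → t'.left = c → t'.up = c' → t = t') ∧
    (∀ c ∉ Col, ∀ c' : C, ∀ t ∈ T, ∀ t' ∈ T,
       t.right = c → t.up = c' → t'.right = c → t'.up = c' → t = t')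

/-! Every tile of `T` has its top and bottom on opposite sides of the partition, so by vertical
matching the tops of row `i + 1` lie, column by column, on the side opposite to the tops of
row `i`. The top row is all white, hence uniform, and uniformity propagates down the rows. -/

namespace IsTiling

variable {C : Type} {white : C} {T : Finset (Tile C)} {Col : Set C} {H W : ℕ}
  {τ : Fin H → Fin W → Tile C}

theorem up_succ_mem_iff_up_not_mem (ht : IsTiling white T H W τ)
    (hT : ∀ t ∈ T, (t.up ∈ Col ↔ t.down ∉ Col)) (i : Fin H) (j : Fin W) (hi : i.val + 1 < H) :
    (τ ⟨i.val + 1, hi⟩ j).up ∈ Col ↔ (τ i j).up ∉ Col := by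
  obtain ⟨hmem, -, -, -, -, -, hvert⟩ := ht
  rw [← hvert i j hi]
  exact iff_not_comm.mp (hT _ (hmem i j))

theorem up_mem_iff_of_same_row (ht : IsTiling white T H W τ)
    (hT : ∀ t ∈ T, (t.up ∈ Col ↔ t.down ∉ Col)) (i : Fin H) (j j' : Fin W) :
    (τ i j).up ∈ Col ↔ (τ i j').up ∈ Col := by
  have htop := ht.2.2.2.1
  obtain ⟨n, hn⟩ := i
  induction n with
  | zero => rw [htop _ j rfl, htop _ j' rfl]
  | succ n ih =>
    rw [ht.up_succ_mem_iff_up_not_mem hT ⟨n, by omega⟩ j hn,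
      ht.up_succ_mem_iff_up_not_mem hT ⟨n, by omega⟩ j' hn]
    exact not_congr (ih (by omega))

end IsTiling

theorem deterministic_row_constant_general {C : Type}
    (white : C) (T : Finset (Tile C)) (Col : Set C)
    (h1 : ∀ t ∈ T, (t.up ∈ Col ↔ t.down ∉ Col))
    (H W : ℕ) (τ : Fin H → Fin W → Tile C) (ht : IsTiling white T H W τ) :
    ∀ i : Fin H, (∀ j, (τ i j).up ∈ Col) ∨ (∀ j, (τ i j).up ∉ Col) := by
  intro i
  by_cases hrow : ∀ j, (τ i j).up ∈ Col
  · exact Or.inl hrow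
  · obtain ⟨j₀, hj₀⟩ := not_forall.mp hrow
    exact Or.inr fun j hj => hj₀ ((ht.up_mem_iff_of_same_row h1 i j j₀).mp hj)

/-- In a tiling with a deterministic tile set with partition Col ⊔ Colᶜ, the top
colors of all tiles in a given row lie on the same side of the partition. -/
theorem deterministic_row_constant {C : Type} [DecidableEq C]
    (white : C) (T : Finset (Tile C)) (Col : Set C) (hwhite : white ∈ Col)
    (h1 : ∀ t ∈ T, (t.up ∈ Col ↔ t.down ∉ Col))
    (h2 : ∀ c ∈ Col, ∀ c' : C, ∀ t ∈ T, ∀ t' ∈ T,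
       t.left = c → t.up = c' → t'.left = c → t'.up = c' → t = t')
    (h3 : ∀ c ∉ Col, ∀ c' : C, ∀ t ∈ T, ∀ t' ∈ T,
       t.right = c → t.up = c' → t'.right = c → t'.up = c' → t = t')
    (H W : ℕ) (τ : Fin H → Fin W → Tile C) (ht : IsTiling white T H W τ) :
    ∀ i : Fin H, (∀ j, (τ i j).up ∈ Col) ∨ (∀ j, (τ i j).up ∉ Col) :=
  deterministic_row_constant_general white T Col h1 H W τ ht
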